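/- Let A and B be symmetric positive definite matrices and let G = A^{1/2}(A^{-1/2}BA^{-1/2})^{1/2}A^{1/2} be their geometric mean. Then log(G^{-1/2} A G^{-1/2}) + log(G^{-1/2} B G^{-1/2}) = 0, i.e., G satisfies the canonical geometric average equation for n = 2. -/

import Mathlib

open scoped Classical in
/-- The symmetric positive definite square root of a positive definite matrix
(junk value \`0\` otherwise). -/
noncomputable def psqrt {p : ℕ} (A : Matrix (Fin p) (Fin p) ℝ) : Matrix (Fin p) (Fin p) ℝ :=
  if h : A.PosDef then
    (h.posSemidef.1.eigenvectorUnitary : Matrix (Fin p) (Fin p) ℝ) *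
      Matrix.diagonal ((↑) ∘ (√·) ∘ h.posSemidef.1.eigenvalues) *
      (star h.posSemidef.1.eigenvectorUnitary : Matrix (Fin p) (Fin p) ℝ)
  else 0

/-- The canonical geometric mean \`G = A^{1/2} (A^{-1/2} B A^{-1/2})^{1/2} A^{1/2}\`
of two positive definite matrices. -/
noncomputable def gMean {p : ℕ} (A B : Matrix (Fin p) (Fin p) ℝ) : Matrix (Fin p) (Fin p) ℝ :=
  psqrt A * psqrt ((psqrt A)⁻¹ * B * (psqrt A)⁻¹) * psqrt A

/-- The matrix logarithm on symmetric positive definite matrices, defined as the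
inverse of the matrix exponential restricted to symmetric matrices. -/
noncomputable def symLog {p : ℕ} (X : Matrix (Fin p) (Fin p) ℝ) : Matrix (Fin p) (Fin p) ℝ :=
  Function.invFunOn (NormedSpace.exp) {Y : Matrix (Fin p) (Fin p) ℝ | Y.IsSymm} X

section Aux
open Matrix
variable {p : ℕ}

open scoped Matrix.Norms.L2Operator MatrixOrder

lemma isSymm_iff_sa (X : Matrix (Fin p) (Fin p) ℝ) : X.IsSymm ↔ _root_.IsSelfAdjoint X := by
  rw [_root_.IsSelfAdjoint, Matrix.IsSymm, star_eq_conjTranspose,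
    conjTranspose_eq_transpose_of_trivial]

lemma posDef_of_posSemidef_isUnit {S : Matrix (Fin p) (Fin p) ℝ} (hS : S.PosSemidef)
    (hd : IsUnit S.det) : S.PosDef := by
  exact hS.posDef_iff_isUnit.mpr ((Matrix.isUnit_iff_isUnit_det S).2 hd)

lemma psqrt_eq {A : Matrix (Fin p) (Fin p) ℝ} (hA : A.PosDef) : psqrt A = cfc Real.sqrt A := by
  rw [psqrt, dif_pos hA, hA.posSemidef.1.cfc_eq, IsHermitian.cfc, Unitary.conjStarAlgAut_apply]
  rfl

lemma psqrt_mul_self {A : Matrix (Fin p) (Fin p) ℝ} (hA : A.PosDef) : psqrt A * psqrt A = A := by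
  rw [psqrt_eq hA, ← cfc_mul Real.sqrt Real.sqrt A]
  conv_rhs => rw [← cfc_id ℝ A]
  refine cfc_congr fun x hx => Real.mul_self_sqrt ?_
  rw [hA.isHermitian.spectrum_real_eq_range_eigenvalues] at hx
  obtain ⟨i, rfl⟩ := hx
  exact (hA.eigenvalues_pos i).le

lemma psqrt_posDef {A : Matrix (Fin p) (Fin p) ℝ} (hA : A.PosDef) : (psqrt A).PosDef := by
  refine posDef_of_posSemidef_isUnit ?_ ?_
  · rw [psqrt_eq hA]
    exact (cfc_nonneg (fun x _ => Real.sqrt_nonneg x) (a := A)).posSemidef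
  have h : (psqrt A).det * (psqrt A).det = A.det := by
    rw [← det_mul, psqrt_mul_self hA]
  have := hA.det_pos
  refine isUnit_iff_ne_zero.2 fun h0 => ?_
  rw [h0, mul_zero] at h
  exact this.ne' h.symm

lemma conj_posDef {M C : Matrix (Fin p) (Fin p) ℝ} (hM : M.PosDef) (hC : C.PosDef) :
    (C⁻¹ * M * C⁻¹).PosDef := by
  have h1 : (C⁻¹ᴴ * M * C⁻¹).PosSemidef := hM.posSemidef.conjTranspose_mul_mul_same C⁻¹
  rw [hC.isHermitian.inv.eq] at h1
  refine posDef_of_posSemidef_isUnit h1 ?_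
  have hCd : IsUnit C⁻¹.det :=
    (Matrix.isUnit_iff_isUnit_det _).1 (Matrix.isUnit_nonsing_inv_iff.2 hC.isUnit)
  simp only [det_mul]
  exact (hCd.mul hM.det_pos.ne'.isUnit).mul hCd

lemma exp_symLog {X : Matrix (Fin p) (Fin p) ℝ} (hX : X.PosDef) :
    (symLog X).IsSymm ∧ NormedSpace.exp (symLog X) = X := by
  have hs : IsStrictlyPositive X := hX.isStrictlyPositive
  have hsa : _root_.IsSelfAdjoint X := hX.isHermitian
  have hw : ∃ Y ∈ {Y : Matrix (Fin p) (Fin p) ℝ | Y.IsSymm}, NormedSpace.exp Y = X :=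
    ⟨CFC.log X, (isSymm_iff_sa _).2 (_root_.IsSelfAdjoint.log), CFC.exp_log X hs⟩
  exact ⟨Function.invFunOn_mem hw, Function.invFunOn_eq hw⟩

lemma symLog_add_symLog_inv {X : Matrix (Fin p) (Fin p) ℝ} (hX : X.PosDef) :
    symLog X + symLog X⁻¹ = 0 := by
  obtain ⟨hLs, hLe⟩ := exp_symLog hX
  obtain ⟨hMs, hMe⟩ := exp_symLog hX.inv
  set L := symLog X
  set M := symLog X⁻¹
  have hinv : NormedSpace.exp (-L) = X⁻¹ := by
    rw [Matrix.exp_neg, hLe]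
  have h1 : M = CFC.log (NormedSpace.exp M) := (CFC.log_exp M ((isSymm_iff_sa _).1 hMs)).symm
  have h2 : CFC.log (NormedSpace.exp (-L)) = -L :=
    CFC.log_exp (-L) (((isSymm_iff_sa _).1 hLs).neg)
  have : M = -L := by rw [h1, hMe, ← hinv, h2]
  rw [this, add_neg_cancel]

end Aux

open Matrix in
/-- The geometric mean `G` of positive definite `A` and `B` satisfies the canonical
geometric average equation for `n = 2`:
`log (G^{-1/2} A G^{-1/2}) + log (G^{-1/2} B G^{-1/2}) = 0`. -/
theorem gMean_geometric_average_eq {p : ℕ} (A B : Matrix (Fin p) (Fin p) ℝ)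
    (hA : A.PosDef) (hB : B.PosDef) :
    symLog ((psqrt (gMean A B))⁻¹ * A * (psqrt (gMean A B))⁻¹) +
      symLog ((psqrt (gMean A B))⁻¹ * B * (psqrt (gMean A B))⁻¹) = 0 := by
  set S := psqrt A with hSdef
  have hS : S.PosDef := psqrt_posDef hA
  have hT' : (S⁻¹ * B * S⁻¹).PosDef := conj_posDef hB hS
  set T := psqrt (S⁻¹ * B * S⁻¹) with hTdef
  have hT : T.PosDef := psqrt_posDef hT'
  have hTT : T * T = S⁻¹ * B * S⁻¹ := psqrt_mul_self hT'
  have hSS : S * S = A := psqrt_mul_self hA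
  haveI := hS.isUnit.invertible
  haveI := hT.isUnit.invertible
  have hGeq : gMean A B = S * T * S := rfl
  have hG : (gMean A B).PosDef := by
    rw [hGeq]
    have h1 : (Sᴴ * T * S).PosSemidef := hT.posSemidef.conjTranspose_mul_mul_same S
    rw [hS.isHermitian.eq] at h1
    refine posDef_of_posSemidef_isUnit h1 ?_
    simp only [det_mul]
    exact (hS.det_pos.ne'.isUnit.mul hT.det_pos.ne'.isUnit).mul hS.det_pos.ne'.isUnit
  have hB' : S * (T * T) * S = B := by
    rw [hTT]
    simp only [Matrix.mul_assoc, Matrix.mul_inv_cancel_left_of_invertible,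
      Matrix.inv_mul_cancel_left_of_invertible, Matrix.inv_mul_cancel_right_of_invertible,
      Matrix.mul_inv_cancel_right_of_invertible, Matrix.inv_mul_of_invertible,
      Matrix.mul_inv_of_invertible, Matrix.mul_one, Matrix.one_mul]
  have hAGB : A * (gMean A B)⁻¹ * B = gMean A B := by
    rw [hGeq, Matrix.mul_inv_rev, Matrix.mul_inv_rev, ← hSS, ← hB']
    simp only [Matrix.mul_assoc, Matrix.mul_inv_cancel_left_of_invertible,
      Matrix.inv_mul_cancel_left_of_invertible]
  set R := psqrt (gMean A B) with hRdef
  have hR : R.PosDef := psqrt_posDef hG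
  haveI := hR.isUnit.invertible
  have hRR : R * R = gMean A B := psqrt_mul_self hG
  have hGi : (gMean A B)⁻¹ = R⁻¹ * R⁻¹ := by rw [← hRR, Matrix.mul_inv_rev]
  have h2 : A * (R⁻¹ * R⁻¹) * B = R * R := by rw [← hGi, hAGB, hRR]
  have hX : (R⁻¹ * A * R⁻¹).PosDef := conj_posDef hA hR
  have key : R⁻¹ * A * R⁻¹ * (R⁻¹ * B * R⁻¹) = 1 := by
    calc R⁻¹ * A * R⁻¹ * (R⁻¹ * B * R⁻¹)
        = R⁻¹ * (A * (R⁻¹ * R⁻¹) * B) * R⁻¹ := by simp only [Matrix.mul_assoc]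
      _ = R⁻¹ * (R * R) * R⁻¹ := by rw [h2]
      _ = 1 := by
          simp only [Matrix.mul_assoc, Matrix.mul_inv_cancel_left_of_invertible,
            Matrix.inv_mul_cancel_left_of_invertible, Matrix.inv_mul_of_invertible,
            Matrix.mul_inv_of_invertible, Matrix.mul_one, Matrix.one_mul]
  have hY : (R⁻¹ * A * R⁻¹)⁻¹ = R⁻¹ * B * R⁻¹ := Matrix.inv_eq_right_inv key
  rw [← hY]
  exact symLog_add_symLog_inv hX
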